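/- arXiv:2102.03504 — 5 statements merged into one kernel-verified Lean document; each statement's English description precedes it below -/
import Mathlib

section
/- Let A be an invertible m×m complex matrix, B an n×n matrix, U an n×m matrix, V an m×n matrix with m ≥ n. If U A⁻¹ V and A + V B U are both invertible, then (U A⁻¹ V)⁻¹ + B is invertible and U (A + V B U)⁻¹ V = ((U A⁻¹ V)⁻¹ + B)⁻¹. -/
/-!
Put `M = A + V B U` and `S = U A⁻¹ V`. Splitting `M` inside `U M⁻¹ V (S⁻¹ + B)` after inserting
`A A⁻¹ = 1` in the first term and `S S⁻¹ = 1` in the second gives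
`U M⁻¹ V S⁻¹ + U M⁻¹ V B U A⁻¹ V S⁻¹ = U M⁻¹ M A⁻¹ V S⁻¹ = S S⁻¹ = 1`.
A one-sided inverse of a square matrix is two-sided, which yields both claims.
-/

namespace Matrix

variable {m n α : Type*} [Fintype m] [DecidableEq m] [Fintype n] [DecidableEq n] [CommRing α]
  {A : Matrix m m α} {B : Matrix n n α} {U : Matrix n m α} {V : Matrix m n α}

theorem mul_inv_add_mul_mul_mul_mul_inv_add_eq_one (hA : IsUnit A) (hS : IsUnit (U * A⁻¹ * V))
    (hM : IsUnit (A + V * B * U)) :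
    U * (A + V * B * U)⁻¹ * V * ((U * A⁻¹ * V)⁻¹ + B) = 1 := by
  set M := A + V * B * U
  set S := U * A⁻¹ * V
  have hAA : A * A⁻¹ = 1 := mul_nonsing_inv A ((isUnit_iff_isUnit_det A).mp hA)
  have hMM : M⁻¹ * M = 1 := nonsing_inv_mul M ((isUnit_iff_isUnit_det M).mp hM)
  have hSS : S * S⁻¹ = 1 := mul_nonsing_inv S ((isUnit_iff_isUnit_det S).mp hS)
  calc U * M⁻¹ * V * (S⁻¹ + B)
      = U * M⁻¹ * (A * A⁻¹) * V * S⁻¹ + U * M⁻¹ * V * B * (S * S⁻¹) := by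
        rw [hAA, hSS, Matrix.mul_one, Matrix.mul_one, Matrix.mul_add, Matrix.mul_assoc]
    _ = U * (M⁻¹ * M) * A⁻¹ * V * S⁻¹ := by
        simp only [M, S, Matrix.mul_add, Matrix.add_mul, Matrix.mul_assoc]
    _ = 1 := by rw [hMM, Matrix.mul_one, ← hSS]

theorem isUnit_inv_add_of_isUnit_add_mul_mul (hA : IsUnit A) (hS : IsUnit (U * A⁻¹ * V))
    (hM : IsUnit (A + V * B * U)) : IsUnit ((U * A⁻¹ * V)⁻¹ + B) :=
  (isUnit_iff_isUnit_det _).mpr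
    (isUnit_det_of_left_inverse (mul_inv_add_mul_mul_mul_mul_inv_add_eq_one hA hS hM))

theorem mul_inv_add_mul_mul_mul_eq_inv (hA : IsUnit A) (hS : IsUnit (U * A⁻¹ * V))
    (hM : IsUnit (A + V * B * U)) :
    U * (A + V * B * U)⁻¹ * V = ((U * A⁻¹ * V)⁻¹ + B)⁻¹ :=
  (inv_eq_left_inv (mul_inv_add_mul_mul_mul_mul_inv_add_eq_one hA hS hM)).symm

end Matrix

theorem stmt_0_general (m n : ℕ)
    (A : Matrix (Fin m) (Fin m) ℂ) (B : Matrix (Fin n) (Fin n) ℂ)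
    (U : Matrix (Fin n) (Fin m) ℂ) (V : Matrix (Fin m) (Fin n) ℂ)
    (hA : IsUnit A) (hUAV : IsUnit (U * A⁻¹ * V)) (hAVBU : IsUnit (A + V * B * U)) :
    IsUnit ((U * A⁻¹ * V)⁻¹ + B) ∧
      U * (A + V * B * U)⁻¹ * V = ((U * A⁻¹ * V)⁻¹ + B)⁻¹ :=
  ⟨Matrix.isUnit_inv_add_of_isUnit_add_mul_mul hA hUAV hAVBU,
    Matrix.mul_inv_add_mul_mul_mul_eq_inv hA hUAV hAVBU⟩

theorem stmt_0 (m n : ℕ) (hmn : m ≥ n)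
    (A : Matrix (Fin m) (Fin m) ℂ) (B : Matrix (Fin n) (Fin n) ℂ)
    (U : Matrix (Fin n) (Fin m) ℂ) (V : Matrix (Fin m) (Fin n) ℂ)
    (hA : IsUnit A) (hUAV : IsUnit (U * A⁻¹ * V)) (hAVBU : IsUnit (A + V * B * U)) :
    IsUnit ((U * A⁻¹ * V)⁻¹ + B) ∧
      U * (A + V * B * U)⁻¹ * V = ((U * A⁻¹ * V)⁻¹ + B)⁻¹ :=
  stmt_0_general m n A B U V hA hUAV hAVBU
end

section
/- Let A be an invertible m×m complex matrix, B an n×n matrix, U an n×m matrix, V an m×n matrix with m ≥ n. If U A⁻¹ V and A + V B U are both invertible, then U (A + V B U)⁻¹ = ((U A⁻¹ V)⁻¹ + B)⁻¹ (U A⁻¹ V)⁻¹ U A⁻¹. -/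
/-! With `S = U A⁻¹ V`, multiplying `A + V B U` on the left by `S⁻¹ U A⁻¹` gives `(S⁻¹ + B) U`,
so it remains to see that `S⁻¹ + B` is invertible. Since `(S⁻¹ + B) S = 1 + B U A⁻¹ V`, this follows
from the generalised matrix determinant lemma `det (A + V B U) = det A * det (1 + B U A⁻¹ V)`. -/

namespace Matrix

variable {m n R : Type*} [Fintype m] [Fintype n] [DecidableEq m] [DecidableEq n] [CommRing R]

theorem inv_mul_mul_inv_mul_add_mul_mul {A : Matrix m m R} {U : Matrix n m R}
    {V : Matrix m n R} (B : Matrix n n R) (hA : IsUnit A.det) (hS : IsUnit (U * A⁻¹ * V).det) :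
    (U * A⁻¹ * V)⁻¹ * U * A⁻¹ * (A + V * B * U) = ((U * A⁻¹ * V)⁻¹ + B) * U := by
  rw [Matrix.mul_add, nonsing_inv_mul_cancel_right _ _ hA, Matrix.add_mul]
  congr 1
  rw [show (U * A⁻¹ * V)⁻¹ * U * A⁻¹ * (V * B * U) = (U * A⁻¹ * V)⁻¹ * (U * A⁻¹ * V) * B * U by
      simp only [Matrix.mul_assoc], nonsing_inv_mul _ hS, Matrix.one_mul]

theorem isUnit_det_inv_add_of_isUnit_det_add_mul_mul {A : Matrix m m R} {B : Matrix n n R}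
    {U : Matrix n m R} {V : Matrix m n R} (hA : IsUnit A.det) (hS : IsUnit (U * A⁻¹ * V).det)
    (hM : IsUnit (A + V * B * U).det) : IsUnit ((U * A⁻¹ * V)⁻¹ + B).det := by
  have hcompress : IsUnit (1 + B * U * A⁻¹ * V).det := by
    rw [Matrix.mul_assoc V, det_add_mul _ _ hA] at hM
    exact isUnit_of_mul_isUnit_right hM
  have hfactor : ((U * A⁻¹ * V)⁻¹ + B).det * (U * A⁻¹ * V).det =
      (1 + B * U * A⁻¹ * V).det := by
    rw [← det_mul, Matrix.add_mul, nonsing_inv_mul _ hS]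
    simp only [Matrix.mul_assoc]
  rw [← hfactor] at hcompress
  exact isUnit_of_mul_isUnit_left hcompress

theorem mul_inv_add_mul_mul {A : Matrix m m R} {B : Matrix n n R} {U : Matrix n m R}
    {V : Matrix m n R} (hA : IsUnit A.det) (hS : IsUnit (U * A⁻¹ * V).det)
    (hM : IsUnit (A + V * B * U).det) :
    U * (A + V * B * U)⁻¹ = ((U * A⁻¹ * V)⁻¹ + B)⁻¹ * (U * A⁻¹ * V)⁻¹ * U * A⁻¹ := by
  have hT := isUnit_det_inv_add_of_isUnit_det_add_mul_mul hA hS hM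
  calc U * (A + V * B * U)⁻¹
      = ((U * A⁻¹ * V)⁻¹ + B)⁻¹ * (((U * A⁻¹ * V)⁻¹ + B) * U) * (A + V * B * U)⁻¹ := by
        rw [nonsing_inv_mul_cancel_left _ _ hT]
    _ = ((U * A⁻¹ * V)⁻¹ + B)⁻¹ * ((U * A⁻¹ * V)⁻¹ * U * A⁻¹ * (A + V * B * U)) *
          (A + V * B * U)⁻¹ := by
        rw [inv_mul_mul_inv_mul_add_mul_mul B hA hS]
    _ = ((U * A⁻¹ * V)⁻¹ + B)⁻¹ * (U * A⁻¹ * V)⁻¹ * U * A⁻¹ := by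
        rw [← Matrix.mul_assoc, mul_nonsing_inv_cancel_right _ _ hM]
        simp only [Matrix.mul_assoc]

end Matrix

theorem stmt_1_general (m n : ℕ)
    (A : Matrix (Fin m) (Fin m) ℂ) (B : Matrix (Fin n) (Fin n) ℂ)
    (U : Matrix (Fin n) (Fin m) ℂ) (V : Matrix (Fin m) (Fin n) ℂ)
    (hA : IsUnit A) (hUAV : IsUnit (U * A⁻¹ * V)) (hAVBU : IsUnit (A + V * B * U)) :
    U * (A + V * B * U)⁻¹ = ((U * A⁻¹ * V)⁻¹ + B)⁻¹ * (U * A⁻¹ * V)⁻¹ * U * A⁻¹ :=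
  Matrix.mul_inv_add_mul_mul (A.isUnit_iff_isUnit_det.mp hA)
    ((Matrix.isUnit_iff_isUnit_det _).mp hUAV) ((Matrix.isUnit_iff_isUnit_det _).mp hAVBU)

theorem stmt_1 (m n : ℕ) (hmn : m ≥ n)
    (A : Matrix (Fin m) (Fin m) ℂ) (B : Matrix (Fin n) (Fin n) ℂ)
    (U : Matrix (Fin n) (Fin m) ℂ) (V : Matrix (Fin m) (Fin n) ℂ)
    (hA : IsUnit A) (hUAV : IsUnit (U * A⁻¹ * V)) (hAVBU : IsUnit (A + V * B * U)) :
    U * (A + V * B * U)⁻¹ = ((U * A⁻¹ * V)⁻¹ + B)⁻¹ * (U * A⁻¹ * V)⁻¹ * U * A⁻¹ :=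
  stmt_1_general m n A B U V hA hUAV hAVBU
end

section
/- Let λ be a complex parameter with |λ| sufficiently small so that the Neumann series for (A + λ V B U)⁻¹ converges. Then U (A + λ V B U)⁻¹ V = ((U A⁻¹ V)⁻¹ + λ B)⁻¹, where A is invertible m×m, B is n×n, U is n×m, V is m×n, and U A⁻¹ V is invertible. -/
theorem stmt_2 (m n : ℕ)
    (A : Matrix (Fin m) (Fin m) ℂ) (B : Matrix (Fin n) (Fin n) ℂ)
    (U : Matrix (Fin n) (Fin m) ℂ) (V : Matrix (Fin m) (Fin n) ℂ)
    (hA : IsUnit A) (hUAV : IsUnit (U * A⁻¹ * V)) :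
    ∃ ε > (0 : ℝ), ∀ lam : ℂ, ‖lam‖ < ε →
      U * (A + lam • (V * B * U))⁻¹ * V = ((U * A⁻¹ * V)⁻¹ + lam • B)⁻¹ := by
  have hdetA : A.det ≠ 0 := by
    have := (Matrix.isUnit_iff_isUnit_det A).mp hA
    simpa [isUnit_iff_ne_zero] using this
  have hcont : Continuous fun lam : ℂ => (A + lam • (V * B * U)).det :=
    (continuous_const.add (continuous_id.smul continuous_const)).matrix_det
  have hopen : IsOpen {lam : ℂ | (A + lam • (V * B * U)).det ≠ 0} :=
    isOpen_compl_singleton.preimage hcont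
  have h0 : (0 : ℂ) ∈ {lam : ℂ | (A + lam • (V * B * U)).det ≠ 0} := by
    simpa using hdetA
  obtain ⟨ε, hε, hball⟩ := Metric.isOpen_iff.mp hopen 0 h0
  refine ⟨ε, hε, fun lam hlam => ?_⟩
  have hmem : lam ∈ Metric.ball (0 : ℂ) ε := by
    simpa [Metric.mem_ball, dist_eq_norm] using hlam
  have hdetM : (A + lam • (V * B * U)).det ≠ 0 := hball hmem
  set M := A + lam • (V * B * U) with hM
  have hMunit : IsUnit M := (Matrix.isUnit_iff_isUnit_det M).mpr (isUnit_iff_ne_zero.mpr hdetM)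
  have hAi : A⁻¹ * A = 1 := Matrix.nonsing_inv_mul A ((Matrix.isUnit_iff_isUnit_det A).mp hA)
  have hMi : M * M⁻¹ = 1 := Matrix.mul_nonsing_inv M ((Matrix.isUnit_iff_isUnit_det M).mp hMunit)
  have hKi : (U * A⁻¹ * V)⁻¹ * (U * A⁻¹ * V) = 1 :=
    Matrix.nonsing_inv_mul _ ((Matrix.isUnit_iff_isUnit_det _).mp hUAV)
  have h1 : U * A⁻¹ * M = U + lam • (U * (A⁻¹ * (V * (B * U)))) := by
    rw [hM, Matrix.mul_add, Matrix.mul_smul]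
    simp only [Matrix.mul_assoc, hAi, Matrix.mul_one]
  have h2 : U * (A⁻¹ * V) =
      U * (M⁻¹ * V) + lam • (U * (A⁻¹ * (V * (B * (U * (M⁻¹ * V)))))) := by
    have h := congrArg (fun X => X * (M⁻¹ * V)) h1
    simp only [Matrix.add_mul, Matrix.smul_mul, Matrix.mul_assoc] at h
    rw [← Matrix.mul_assoc M M⁻¹ V, hMi, Matrix.one_mul] at h
    exact h
  have h3 : ((U * A⁻¹ * V)⁻¹ + lam • B) * (U * (M⁻¹ * V)) = 1 := by
    have h := congrArg (fun X => (U * A⁻¹ * V)⁻¹ * X) h2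
    simp only [Matrix.mul_add, Matrix.mul_smul] at h
    rw [show U * (A⁻¹ * V) = U * A⁻¹ * V from (Matrix.mul_assoc U A⁻¹ V).symm,
      hKi] at h
    rw [show U * (A⁻¹ * (V * (B * (U * (M⁻¹ * V))))) =
        (U * A⁻¹ * V) * (B * (U * (M⁻¹ * V))) by
          simp only [Matrix.mul_assoc]] at h
    rw [← Matrix.mul_assoc ((U * A⁻¹ * V)⁻¹) (U * A⁻¹ * V) _, hKi, Matrix.one_mul] at h
    rw [Matrix.add_mul, Matrix.smul_mul]
    exact h.symm
  rw [Matrix.inv_eq_right_inv h3, Matrix.mul_assoc]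
end

section
/- Let K★, K° be bounded operators on a Banach space X with I + K★ invertible, and split f = f★ + f°. Set g = (I + K★)⁻¹ f★ and v = (I + K★)⁻¹ ṽ. Then ρ = v + g solves (I + K★ + K°)ρ = f if and only if ṽ solves (I + K°(I + K★)⁻¹) ṽ = f° − K°(I + K★)⁻¹ f★. -/
theorem stmt_6 (X : Type*) [NormedAddCommGroup X] [NormedSpace ℂ X] [CompleteSpace X]
    (Ks Ko : X →L[ℂ] X) (hKs : IsUnit (1 + Ks))
    (fstar fcirc vtil : X)
    (g v : X) (hg : g = Ring.inverse (1 + Ks) fstar) (hv : v = Ring.inverse (1 + Ks) vtil) :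
    (1 + Ks + Ko) (v + g) = fstar + fcirc ↔
      (1 + Ko * Ring.inverse (1 + Ks)) vtil = fcirc - (Ko * Ring.inverse (1 + Ks)) fstar := by
  have hA : ∀ x : X, (1 + Ks) (Ring.inverse (1 + Ks) x) = x := by
    intro x
    have h := Ring.mul_inverse_cancel _ hKs
    calc (1 + Ks) (Ring.inverse (1 + Ks) x)
        = ((1 + Ks) * Ring.inverse (1 + Ks)) x := rfl
      _ = x := by rw [h]; rfl
  subst hg hv
  simp only [ContinuousLinearMap.add_apply, ContinuousLinearMap.mul_apply,
    ContinuousLinearMap.one_apply, map_add, hA]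
  constructor <;> intro h <;>
    · rw [← sub_eq_zero] at h ⊢
      rw [← h]
      abel
end

section
/- Let Γ be the circle of circumference π, λ ∈ (0,1), α ∈ ℂ with Re α < 1, and let ℓ(r) denote arc length from a fixed point γ to r along Γ (counterclockwise). If f(r) = ℓ(r)^{-α} + (π − ℓ(r))^{-α} and K is the operator Kρ(r) = 2λ ∫_Γ (∂G/∂ν)(r,r') ρ(r') dℓ' with G(r,r') = −(1/2π) log|r−r'|, then ρ(r) = f(r) + 2λ π^{-α} / ((1−α)(1−λ)) solves (I+K)ρ = f on Γ. -/
/-!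
Since `Kρ` is the constant `-(λ/π) ∫ ρ`, the equation `(I + K)ρ = f` for `ρ = f + c` reduces to the
scalar equation `c = (λ/π) (∫ f + π c)`. By the reflection `t ↦ π - t` both terms of `f` have integral
`π^(1-α)/(1-α)`, and `c = 2λπ^(-α)/((1-α)(1-λ))` is the solution.
-/

open MeasureTheory Complex intervalIntegral

lemma Complex.add_one_ne_zero_of_neg_one_lt_re {β : ℂ} (hβ : -1 < β.re) : β + 1 ≠ 0 := by
  intro h
  have := congrArg re h
  simp only [add_re, one_re, zero_re] at this
  linarith

lemma intervalIntegrable_sub_ofReal_cpow {β : ℂ} (hβ : -1 < β.re) (a : ℝ) :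
    IntervalIntegrable (fun t : ℝ => ((a : ℂ) - t) ^ β) volume 0 a := by
  simpa using ((intervalIntegrable_cpow' hβ).comp_sub_left a (a := 0) (b := a)).symm

lemma integral_ofReal_cpow_of_neg_one_lt_re {β : ℂ} (hβ : -1 < β.re) (a : ℝ) :
    ∫ t in (0 : ℝ)..a, (t : ℂ) ^ β = (a : ℂ) ^ (β + 1) / (β + 1) := by
  rw [integral_cpow (Or.inl hβ), ofReal_zero, zero_cpow (add_one_ne_zero_of_neg_one_lt_re hβ),
    sub_zero]

lemma integral_sub_ofReal_cpow_of_neg_one_lt_re {β : ℂ} (hβ : -1 < β.re) (a : ℝ) :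
    ∫ t in (0 : ℝ)..a, ((a : ℂ) - t) ^ β = (a : ℂ) ^ (β + 1) / (β + 1) := by
  have h := integral_comp_sub_left (fun t : ℝ => (t : ℂ) ^ β) a (a := 0) (b := a)
  simp only [sub_self, sub_zero, ofReal_sub] at h
  rw [h, integral_ofReal_cpow_of_neg_one_lt_re hβ]

lemma integral_ofReal_cpow_add_sub_ofReal_cpow {β : ℂ} (hβ : -1 < β.re) (a : ℝ) :
    ∫ t in (0 : ℝ)..a, ((t : ℂ) ^ β + ((a : ℂ) - t) ^ β) = 2 * (a : ℂ) ^ (β + 1) / (β + 1) := by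
  rw [integral_add (intervalIntegrable_cpow' hβ) (intervalIntegrable_sub_ofReal_cpow hβ a),
    integral_ofReal_cpow_of_neg_one_lt_re hβ, integral_sub_ofReal_cpow_of_neg_one_lt_re hβ]
  ring

/-- The transmission-problem integral equation on the circle of circumference `π`,
parameterized by arc length `s ∈ (0, π)`, with `Kρ(s) = -(λ/π) ∫_0^π ρ(t) dt`.
The explicit `ρ` solves `(I+K)ρ = f`. -/
theorem stmt_7 (lam : ℝ) (hlam : lam ∈ Set.Ioo (0 : ℝ) 1) (α : ℂ) (hα : α.re < 1)
    (f ρ : ℝ → ℂ)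
    (hf : ∀ s, f s = (s : ℂ) ^ (-α) + ((π : ℝ) - s : ℂ) ^ (-α))
    (hρ : ∀ s, ρ s = f s + 2 * lam * (π : ℂ) ^ (-α) / ((1 - α) * (1 - lam))) :
    ∀ s ∈ Set.Ioo (0 : ℝ) π,
      ρ s - ((lam : ℂ) / π) * ∫ t in (0 : ℝ)..π, ρ t = f s := by
  intro s hs
  have hre : -1 < (-α).re := by rw [neg_re]; linarith
  have h1α : 1 - α ≠ 0 := by
    simpa [sub_eq_add_neg, add_comm] using add_one_ne_zero_of_neg_one_lt_re hre
  have h1lam : (1 : ℂ) - lam ≠ 0 := by exact_mod_cast sub_ne_zero.2 hlam.2.ne'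
  have hπ : (π : ℂ) ≠ 0 := ofReal_ne_zero.2 (hs.1.trans hs.2).ne'
  set c : ℂ := 2 * lam * (π : ℂ) ^ (-α) / ((1 - α) * (1 - lam))
  have hf_int : IntervalIntegrable f volume 0 π := by
    simpa only [← funext hf] using
      (intervalIntegrable_cpow' hre).add (intervalIntegrable_sub_ofReal_cpow hre π)
  have hρ_int : ∫ t in (0 : ℝ)..π, ρ t = 2 * π * (π : ℂ) ^ (-α) / (1 - α) + π * c := by
    rw [funext hρ, integral_add hf_int intervalIntegrable_const, intervalIntegral.integral_const,
      sub_zero, real_smul, funext hf, integral_ofReal_cpow_add_sub_ofReal_cpow hre,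
      cpow_add _ _ hπ, cpow_one]
    ring
  rw [hρ, hρ_int]
  simp only [c]
  field_simp
  ring
end
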